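/- Let 0 < q < 1, let a, b, c, d ∈ ℂ and let n ∈ ℕ satisfy a·b·c·d·q^j ≠ 1 for all 0 ≤ j ≤ n; set θ = 1/√(1−q). Let φ : ℕ×ℕ → ℂ satisfy the recursions (SolA) and (SolB) at every pair (m,n′) with m + n′ = n. For 0 ≤ ℓ ≤ n+1 and t ∈ ℂ define G_ℓ(t) = Σ_{k=0}^{ℓ} binom_q(ℓ,k)·φ(k,ℓ−k)·t^k (and set G_{−1} = 0). Then for every t ∈ ℂ: (1 − abcd·q^n)·G_{n+1}(t) = θ·[(a+b)(1 − t·cd)·G_n(q·t) + (c+d)(t − q^n·ab)·G_n(t)] − θ²·(1 − q^n)·[ab·(1 − t·cd)·G_{n−1}(q·t) + t·cd·(t − ab·q^n)·G_{n−1}(t)]. -/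

import Mathlib

/-! Expanding `G_{n+1}` by the q-Pascal rule `binom(n+1,k) = q^k binom(n,k) + binom(n,k-1)`
pairs, at each lattice point `(k, n-k)`, recursion (SolB) weighted by `q^k t^k` with (SolA)
weighted by `t^(k+1)`. The `θ`-terms assemble into the first bracket of the right-hand side;
the others carry a factor `[n-k]_q` or `[k]_q`, which the absorption identities
`[n-k] binom(n,k) = [n] binom(n-1,k)` and `[k+1] binom(n,k+1) = [n] binom(n-1,k)` turn into
`[n]_q` times `G_{n-1}`. Finally `θ²(1-q^n) = [n]_q` because `θ²(1-q) = 1`. -/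


noncomputable section

open scoped BigOperators

/-- The q-integer `[k]_q = 1 + q + ⋯ + q^{k-1}` (with `[0]_q = 0`). -/
def qIntC (q : ℂ) (k : ℕ) : ℂ := ∑ i ∈ Finset.range k, q ^ i

/-- The Gaussian (q-)binomial coefficient, characterized by
`qBinom q n 0 = 1`, `qBinom q 0 (k+1) = 0` and the Pascal-type rule
`qBinom q (n+1) (k+1) = q^(k+1) * qBinom q n (k+1) + qBinom q n k`. -/
def qBinom (q : ℂ) : ℕ → ℕ → ℂ
  | _, 0 => 1
  | 0, _ + 1 => 0
  | n + 1, k + 1 => q ^ (k + 1) * qBinom q n (k + 1) + qBinom q n k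

/-- Recursion (SolA) at `(m,n)`; terms that would carry a negative index are written
with truncated subtraction, their coefficients `[0]_q = 0` vanishing. -/
def SolA (q θ a b c d : ℂ) (φ : ℕ → ℕ → ℂ) (m n : ℕ) : Prop :=
  (1 - a * b * c * d * q ^ (m + n)) * φ (m + 1) n =
    θ * (c + d - c * d * (a + b) * q ^ m) * φ m n
      - c * d * qIntC q m * φ (m - 1) n
      + a * b * c * d * q ^ m * qIntC q n * φ m (n - 1)

/-- Recursion (SolB) at `(m,n)`; terms that would carry a negative index are written
with truncated subtraction, their coefficients `[0]_q = 0` vanishing. -/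
def SolB (q θ a b c d : ℂ) (φ : ℕ → ℕ → ℂ) (m n : ℕ) : Prop :=
  (1 - a * b * c * d * q ^ (m + n)) * φ m (n + 1) =
    θ * (a + b - a * b * (c + d) * q ^ n) * φ m n
      - a * b * qIntC q n * φ m (n - 1)
      + a * b * c * d * q ^ n * qIntC q m * φ (m - 1) n

/-- `Gfun q φ ℓ t = Σ_{k=0}^{ℓ} binom_q(ℓ,k)·φ(k,ℓ-k)·t^k`. -/
def Gfun (q : ℂ) (φ : ℕ → ℕ → ℂ) (ℓ : ℕ) (t : ℂ) : ℂ :=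
  ∑ k ∈ Finset.range (ℓ + 1), qBinom q ℓ k * φ k (ℓ - k) * t ^ k

open Finset

section QCalculus

variable (q : ℂ)

@[simp]
lemma qIntC_zero : qIntC q 0 = 0 := rfl

lemma qIntC_add (m k : ℕ) : qIntC q (m + k) = qIntC q m + q ^ m * qIntC q k := by
  simp only [qIntC, sum_range_add, mul_sum, pow_add]

lemma qIntC_mul_sub_one (n : ℕ) : qIntC q n * (q - 1) = q ^ n - 1 :=
  geom_sum_mul q n

lemma sq_mul_one_sub_pow_eq_qIntC {θ : ℂ} (hθ : θ ^ 2 * (1 - q) = 1) (n : ℕ) :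
    θ ^ 2 * (1 - q ^ n) = qIntC q n := by
  linear_combination θ ^ 2 * qIntC_mul_sub_one q n + qIntC q n * hθ

@[simp]
lemma qBinom_zero_right (n : ℕ) : qBinom q n 0 = 1 := by
  cases n <;> rfl

lemma qBinom_succ_succ (n k : ℕ) :
    qBinom q (n + 1) (k + 1) = q ^ (k + 1) * qBinom q n (k + 1) + qBinom q n k := rfl

lemma qBinom_eq_zero_of_lt : ∀ {n k : ℕ}, n < k → qBinom q n k = 0
  | 0, _ + 1, _ => rfl
  | n + 1, k + 1, h => by
    rw [qBinom_succ_succ, qBinom_eq_zero_of_lt (by omega : n < k + 1),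
      qBinom_eq_zero_of_lt (by omega : n < k), mul_zero, add_zero]

/-- The inductive step of each absorption identity uses both. -/
lemma qIntC_mul_qBinom_absorb (n : ℕ) :
    (∀ k, qIntC q (n + 1 - k) * qBinom q (n + 1) k = qIntC q (n + 1) * qBinom q n k) ∧
    (∀ k, qIntC q (k + 1) * qBinom q (n + 1) (k + 1) = qIntC q (n + 1) * qBinom q n k) := by
  induction n with
  | zero =>
    refine ⟨fun k => ?_, fun k => ?_⟩ <;> rcases k with _ | k
    · simp
    · simp [show 1 - (k + 1) = 0 by omega, qBinom_eq_zero_of_lt q (by omega : 0 < k + 1)]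
    · simp [qBinom_succ_succ, qBinom_eq_zero_of_lt q (by omega : 0 < 1)]
    · rw [qBinom_eq_zero_of_lt q (by omega : 1 < k + 1 + 1),
        qBinom_eq_zero_of_lt q (by omega : 0 < k + 1)]
      simp
  | succ n ih =>
    obtain ⟨ihLeft, ihRight⟩ := ih
    have hsplit : ∀ k ≤ n + 1,
        qIntC q (n + 2) = qIntC q (k + 1) + q ^ (k + 1) * qIntC q (n + 1 - k) := fun k hk => by
      rw [← qIntC_add]; congr 1; omega
    refine ⟨fun k => ?_, fun k => ?_⟩
    · rcases k with _ | k
      · simp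
      by_cases hk : k ≤ n + 1
      · rw [show n + 1 + 1 - (k + 1) = n + 1 - k by omega, qBinom_succ_succ]
        linear_combination ihLeft k - ihRight k - qBinom q (n + 1) (k + 1) * hsplit k hk
      · rw [show n + 1 + 1 - (k + 1) = 0 by omega,
          qBinom_eq_zero_of_lt q (by omega : n + 1 < k + 1)]
        simp
    · by_cases hk : k ≤ n + 1
      · rw [qBinom_succ_succ]
        linear_combination q ^ (k + 1) * ihRight k - q ^ (k + 1) * ihLeft k
          - qBinom q (n + 1) k * hsplit k hk
      · rw [qBinom_eq_zero_of_lt q (by omega : n + 1 < k), qBinom_succ_succ,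
          qBinom_eq_zero_of_lt q (by omega : n + 1 < k + 1),
          qBinom_eq_zero_of_lt q (by omega : n + 1 < k)]
        simp

lemma qIntC_sub_mul_qBinom (n k : ℕ) :
    qIntC q (n - k) * qBinom q n k = qIntC q n * qBinom q (n - 1) k := by
  rcases n with _ | n
  · simp
  · exact (qIntC_mul_qBinom_absorb q n).1 k

lemma qIntC_succ_mul_qBinom_succ (n k : ℕ) :
    qIntC q (k + 1) * qBinom q n (k + 1) = qIntC q n * qBinom q (n - 1) k := by
  rcases n with _ | n
  · simp [qBinom_eq_zero_of_lt q (by omega : 0 < k + 1)]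
  · exact (qIntC_mul_qBinom_absorb q n).2 k

lemma sum_range_succ_qBinom_mul (n : ℕ) (f : ℕ → ℂ) :
    ∑ k ∈ range (n + 2), qBinom q (n + 1) k * f k
      = ∑ k ∈ range (n + 1), qBinom q n k * (q ^ k * f k + f (k + 1)) := by
  have hshift : ∑ k ∈ range (n + 1), q ^ k * qBinom q n k * f k
      = ∑ k ∈ range (n + 1), q ^ (k + 1) * qBinom q n (k + 1) * f (k + 1) + f 0 := by
    rw [sum_range_succ', sum_range_succ _ n, qBinom_eq_zero_of_lt q (Nat.lt_succ_self n)]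
    simp
  simp only [mul_add, ← mul_assoc, mul_comm _ (q ^ _), sum_add_distrib, hshift,
    sum_range_succ' _ (n + 1), qBinom_succ_succ, add_mul, qBinom_zero_right]
  ring

lemma sum_range_qIntC_sub_mul_qBinom (n : ℕ) (f : ℕ → ℂ) :
    ∑ k ∈ range (n + 1), qIntC q (n - k) * qBinom q n k * f k
      = qIntC q n * ∑ k ∈ range (n - 1 + 1), qBinom q (n - 1) k * f k := by
  rcases n with _ | n
  · simp
  · simp only [qIntC_sub_mul_qBinom, mul_assoc, ← mul_sum, sum_range_succ _ (n + 1),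
      qBinom_eq_zero_of_lt q (Nat.lt_succ_self n), Nat.add_sub_cancel, zero_mul, mul_zero,
      add_zero]

lemma sum_range_qIntC_mul_qBinom (n : ℕ) (f : ℕ → ℂ) :
    ∑ k ∈ range (n + 1), qIntC q k * qBinom q n k * f k
      = qIntC q n * ∑ k ∈ range (n - 1 + 1), qBinom q (n - 1) k * f (k + 1) := by
  rcases n with _ | n
  · simp
  · rw [sum_range_succ', qIntC_zero, zero_mul, zero_mul, add_zero, Nat.add_sub_cancel, mul_sum]
    simp only [qIntC_succ_mul_qBinom_succ, Nat.add_sub_cancel, mul_assoc]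

end QCalculus

section Recurrence

variable (q θ a b c d : ℂ) (φ : ℕ → ℕ → ℂ)

lemma one_sub_mul_add_eq_of_solA_solB (m j : ℕ) (t : ℂ) (hA : SolA q θ a b c d φ m j)
    (hB : SolB q θ a b c d φ m j) :
    (1 - a * b * c * d * q ^ (m + j))
        * (q ^ m * t ^ m * φ m (j + 1) + t ^ (m + 1) * φ (m + 1) j)
      = θ * ((a + b) * (1 - t * c * d) * (q * t) ^ m
          + (c + d) * (t - q ^ (m + j) * a * b) * t ^ m) * φ m j
        - qIntC q j * (a * b * (1 - t * c * d) * (q * t) ^ m * φ m (j - 1))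
        - qIntC q m * (c * d * t ^ m * (t - a * b * q ^ (m + j)) * φ (m - 1) j) := by
  unfold SolA at hA
  unfold SolB at hB
  linear_combination q ^ m * t ^ m * hB + t ^ (m + 1) * hA

lemma one_sub_mul_Gfun_succ (n : ℕ) (hA : ∀ m j, m + j = n → SolA q θ a b c d φ m j)
    (hB : ∀ m j, m + j = n → SolB q θ a b c d φ m j) (t : ℂ) :
    (1 - a * b * c * d * q ^ n) * Gfun q φ (n + 1) t =
      θ * ((a + b) * (1 - t * c * d) * Gfun q φ n (q * t)
            + (c + d) * (t - q ^ n * a * b) * Gfun q φ n t)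
        - qIntC q n *
            (a * b * (1 - t * c * d) * Gfun q φ (n - 1) (q * t)
              + t * c * d * (t - a * b * q ^ n) * Gfun q φ (n - 1) t) := by
  set e := 1 - a * b * c * d * q ^ n
  set f : ℕ → ℂ := fun k => e * (t ^ k * φ k (n + 1 - k))
  have hstep : ∀ k ∈ range (n + 1), qBinom q n k * (q ^ k * f k + f (k + 1))
      = θ * (qBinom q n k * ((a + b) * (1 - t * c * d) * (q * t) ^ k
          + (c + d) * (t - q ^ n * a * b) * t ^ k) * φ k (n - k))
        - qIntC q (n - k) * qBinom q n k
            * (a * b * (1 - t * c * d) * (q * t) ^ k * φ k (n - 1 - k))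
        - qIntC q k * qBinom q n k
            * (c * d * t ^ k * (t - a * b * q ^ n) * φ (k - 1) (n - k)) := by
    intro k hk
    have hkn : k + (n - k) = n := by have := mem_range.mp hk; omega
    have hcomb := one_sub_mul_add_eq_of_solA_solB q θ a b c d φ k (n - k) t
      (hA k _ hkn) (hB k _ hkn)
    rw [hkn] at hcomb
    simp only [f, show n + 1 - k = n - k + 1 by omega, show n + 1 - (k + 1) = n - k by omega,
      show n - 1 - k = n - k - 1 by omega]
    linear_combination qBinom q n k * hcomb
  have hG : ∀ ℓ s,
      Gfun q φ ℓ s = ∑ k ∈ range (ℓ + 1), qBinom q ℓ k * (s ^ k * φ k (ℓ - k)) :=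
    fun ℓ s => sum_congr rfl fun k _ => by ring
  calc e * Gfun q φ (n + 1) t = ∑ k ∈ range (n + 2), qBinom q (n + 1) k * f k := by
        rw [hG, mul_sum]; exact sum_congr rfl fun k _ => by ring
    _ = ∑ k ∈ range (n + 1), qBinom q n k * (q ^ k * f k + f (k + 1)) :=
        sum_range_succ_qBinom_mul q n f
    _ = _ := by
        rw [sum_congr rfl hstep, sum_sub_distrib, sum_sub_distrib, ← mul_sum,
          sum_range_qIntC_sub_mul_qBinom, sum_range_qIntC_mul_qBinom]
        rw [sub_sub, ← mul_add, ← sum_add_distrib]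
        congr 2 <;> simp only [hG, mul_sum, ← sum_add_distrib] <;>
          refine sum_congr rfl fun k _ => ?_
        · ring
        · rw [Nat.add_sub_cancel, show n - (k + 1) = n - 1 - k by omega]
          ring

end Recurrence

lemma ofReal_one_div_sqrt_sq_mul_one_sub {q : ℝ} (hq : q < 1) :
    ((1 / Real.sqrt (1 - q) : ℝ) : ℂ) ^ 2 * (1 - (q : ℂ)) = 1 := by
  have hpos : 0 < 1 - q := by linarith
  have h : (1 / Real.sqrt (1 - q)) ^ 2 * (1 - q) = 1 := by
    rw [div_pow, one_pow, Real.sq_sqrt hpos.le, one_div_mul_cancel hpos.ne']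
  exact_mod_cast h

theorem stmt14_general (q : ℝ) (hq1 : q < 1)
    (a b c d : ℂ) (n : ℕ)
    (θ : ℂ) (hθ : θ = ((1 / Real.sqrt (1 - q) : ℝ) : ℂ))
    (φ : ℕ → ℕ → ℂ)
    (hA : ∀ m n' : ℕ, m + n' = n → SolA (q : ℂ) θ a b c d φ m n')
    (hB : ∀ m n' : ℕ, m + n' = n → SolB (q : ℂ) θ a b c d φ m n') :
    ∀ t : ℂ,
      (1 - a * b * c * d * (q : ℂ) ^ n) * Gfun (q : ℂ) φ (n + 1) t =
        θ * ((a + b) * (1 - t * c * d) * Gfun (q : ℂ) φ n ((q : ℂ) * t)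
              + (c + d) * (t - (q : ℂ) ^ n * a * b) * Gfun (q : ℂ) φ n t)
          - θ ^ 2 * (1 - (q : ℂ) ^ n) *
              (a * b * (1 - t * c * d) * Gfun (q : ℂ) φ (n - 1) ((q : ℂ) * t)
                + t * c * d * (t - a * b * (q : ℂ) ^ n) * Gfun (q : ℂ) φ (n - 1) t) := by
  intro t
  have hθsq : θ ^ 2 * (1 - (q : ℂ)) = 1 := hθ ▸ ofReal_one_div_sqrt_sq_mul_one_sub hq1
  rw [sq_mul_one_sub_pow_eq_qIntC _ hθsq]
  exact one_sub_mul_Gfun_succ _ θ a b c d φ n hA hB t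

theorem stmt14 (q : ℝ) (hq0 : 0 < q) (hq1 : q < 1)
    (a b c d : ℂ) (n : ℕ)
    (hsing : ∀ j : ℕ, j ≤ n → a * b * c * d * (q : ℂ) ^ j ≠ 1)
    (θ : ℂ) (hθ : θ = ((1 / Real.sqrt (1 - q) : ℝ) : ℂ))
    (φ : ℕ → ℕ → ℂ)
    (hA : ∀ m n' : ℕ, m + n' = n → SolA (q : ℂ) θ a b c d φ m n')
    (hB : ∀ m n' : ℕ, m + n' = n → SolB (q : ℂ) θ a b c d φ m n') :
    ∀ t : ℂ,
      (1 - a * b * c * d * (q : ℂ) ^ n) * Gfun (q : ℂ) φ (n + 1) t =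
        θ * ((a + b) * (1 - t * c * d) * Gfun (q : ℂ) φ n ((q : ℂ) * t)
              + (c + d) * (t - (q : ℂ) ^ n * a * b) * Gfun (q : ℂ) φ n t)
          - θ ^ 2 * (1 - (q : ℂ) ^ n) *
              (a * b * (1 - t * c * d) * Gfun (q : ℂ) φ (n - 1) ((q : ℂ) * t)
                + t * c * d * (t - a * b * (q : ℂ) ^ n) * Gfun (q : ℂ) φ (n - 1) t) :=
  stmt14_general q hq1 a b c d n θ hθ φ hA hB
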